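/- Let $\mathcal{C}$ be a stable $\infty$-category admitting small coproducts, equipped with a monoidal structure whose tensor product is exact and preserves small coproducts in each variable. Then for any objects $F', F'' \in \mathcal{C}$ and any integer $n \ge 0$, one has $F' \otimes \langle\!\langle F'' \rangle\!\rangle^{\star n} \subset \langle\!\langle F' \otimes F'' \rangle\!\rangle^{\star n}$; that is, tensoring any object of $\langle\!\langle F'' \rangle\!\rangle^{\star n}$ with $F'$ produces an object of $\langle\!\langle F' \otimes F'' \rangle\!\rangle^{\star n}$. -/
import Mathlib


open CategoryTheory Limits Pretriangulated AlgebraicGeometry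

universe v u

namespace StrongGen

variable {C : Type u} [Category.{v} C]

/-- A collection of objects is *big closed* if it is closed under small coproducts
and direct summands (retracts). -/
def IsBigClosedColl (S : Set C) : Prop :=
  (∀ ⦃ι : Type v⦄ (f : ι → C) (c : Cofan f),
      Nonempty (IsColimit c) → (∀ i, f i ∈ S) → c.pt ∈ S) ∧
  (∀ ⦃X Y : C⦄ (s : X ⟶ Y) (r : Y ⟶ X), s ≫ r = 𝟙 X → Y ∈ S → X ∈ S)

/-- `⟨⟨S⟩⟩`, the smallest big closed collection containing `S`. -/
def bcclos (S : Set C) : Set C := ⋂₀ {T : Set C | IsBigClosedColl T ∧ S ⊆ T}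

variable [HasZeroObject C] [Preadditive C] [HasShift C ℤ]
  [∀ n : ℤ, (shiftFunctor C n).Additive] [Pretriangulated C]

/-- The collection of objects `Y` fitting in a cofiber sequence (distinguished
triangle) `X ⟶ Y ⟶ Z ⟶ X⟦1⟧` with `X ∈ S` and `Z ∈ T`. -/
def extColl (S T : Set C) : Set C :=
  {Y | ∃ (X Z : C) (f : X ⟶ Y) (g : Y ⟶ Z) (h : Z ⟶ X⟦(1 : ℤ)⟧),
    X ∈ S ∧ Z ∈ T ∧ Triangle.mk f g h ∈ distTriang C}

/-- `S ⋆ T` in the "big" sense: the smallest big closed collection containing all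
extensions of an object of `T` by an object of `S`. -/
def bstar (S T : Set C) : Set C := bcclos (extColl S T)

/-- The `n`-th star power of `S` in the "big" sense; `S^{⋆ 0}` is the collection
of zero objects. -/
def bstarPow (S : Set C) : ℕ → Set C
  | 0 => {X : C | IsZero X}
  | (n + 1) => bstar S (bstarPow S n)

end StrongGen

namespace StrongGenAux

open StrongGen

variable {C : Type u} [Category.{v} C]

lemma isBigClosed_bcclos (S : Set C) : IsBigClosedColl (bcclos S) := by
  constructor
  · intro ι f c hc hf T hT
    exact hT.1.1 f c hc fun i => hf i T hT
  · intro X Y s r hsr hY T hT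
    exact hT.1.2 s r hsr (hY T hT)

lemma subset_bcclos (S : Set C) : S ⊆ bcclos S :=
  fun _ hX _ hT => hT.2 hX

lemma bcclos_subset {S T : Set C} (hT : IsBigClosedColl T) (h : S ⊆ T) :
    bcclos S ⊆ T := fun _ hX => hX T ⟨hT, h⟩

variable {D : Type u} [Category.{v} D]

lemma isBigClosed_preimage (F : C ⥤ D)
    [∀ ι : Type v, PreservesColimitsOfShape (Discrete ι) F]
    {T : Set D} (hT : IsBigClosedColl T) : IsBigClosedColl (F.obj ⁻¹' T) := by
  constructor
  · rintro ι f c ⟨hc⟩ hf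
    have hc' : IsColimit (Cofan.mk c.pt c.inj) :=
      hc.ofIsoColimit (Cocones.ext (Iso.refl _) (by rintro ⟨i⟩; simp [Cofan.inj]))
    have := isColimitCofanMkObjOfIsColimit F f _ hc'
    exact hT.1 (fun i => F.obj (f i)) _ ⟨this⟩ hf
  · intro X Y s r h hY
    exact hT.2 (F.map s) (F.map r) (by rw [← F.map_comp, h, F.map_id]) hY

variable [HasZeroObject C] [Preadditive C] [HasShift C ℤ]
  [∀ n : ℤ, (shiftFunctor C n).Additive] [Pretriangulated C]
  [HasZeroObject D] [Preadditive D] [HasShift D ℤ]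
  [∀ n : ℤ, (shiftFunctor D n).Additive] [Pretriangulated D]

lemma extColl_mono {S S' T T' : Set C} (hS : S ⊆ S') (hT : T ⊆ T') :
    extColl S T ⊆ extColl S' T' := by
  rintro Y ⟨X, Z, f, g, h, hX, hZ, hd⟩
  exact ⟨X, Z, f, g, h, hS hX, hT hZ, hd⟩

lemma extColl_map (F : C ⥤ D) [F.CommShift ℤ] [F.IsTriangulated]
    {S T : Set C} {Y : C} (hY : Y ∈ extColl S T) :
    F.obj Y ∈ extColl (F.obj '' S) (F.obj '' T) := by
  obtain ⟨X, Z, f, g, h, hX, hZ, hd⟩ := hY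
  exact ⟨F.obj X, F.obj Z, F.map f, F.map g,
    F.map h ≫ (F.commShiftIso (1 : ℤ)).hom.app X,
    ⟨X, hX, rfl⟩, ⟨Z, hZ, rfl⟩, F.map_distinguished _ hd⟩

lemma map_bstarPow (F : C ⥤ D) [F.CommShift ℤ] [F.IsTriangulated]
    [∀ ι : Type v, PreservesColimitsOfShape (Discrete ι) F]
    (S : Set C) (n : ℕ) :
    ∀ X ∈ bstarPow S n, F.obj X ∈ bstarPow (F.obj '' S) n := by
  induction n with
  | zero => exact fun X hX => F.map_isZero hX
  | succ n ih =>
    intro X hX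
    refine bcclos_subset (T := F.obj ⁻¹' bstarPow (F.obj '' S) (n + 1))
      (isBigClosed_preimage F (isBigClosed_bcclos _)) ?_ hX
    intro Y hY
    apply subset_bcclos
    refine extColl_mono le_rfl ?_ (extColl_map F hY)
    rintro Z ⟨W, hW, rfl⟩
    exact ih W hW

end StrongGenAux

open StrongGen MonoidalCategory in
/-- let `C` be a stable ∞-category admitting small coproducts
(modelled as a pretriangulated category), equipped with a monoidal structure whose
tensor product is exact (triangulated) and preserves small coproducts in each
variable.  Then for any `F', F'' ∈ C` and `n ≥ 0`,
`F' ⊗ ⟨⟨F''⟩⟩^{⋆ n} ⊆ ⟨⟨F' ⊗ F''⟩⟩^{⋆ n}`. -/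
theorem tensor_bstarPow_subset
    {C : Type u} [Category.{v} C] [HasZeroObject C] [Preadditive C] [HasShift C ℤ]
    [∀ n : ℤ, (shiftFunctor C n).Additive] [Pretriangulated C]
    [HasCoproducts.{v} C] [MonoidalCategory C]
    -- the tensor product is exact in each variable:
    (csL : ∀ W : C, (tensorLeft W).CommShift ℤ)
    (triL : ∀ W : C, letI := csL W; (tensorLeft W).IsTriangulated)
    (csR : ∀ W : C, (tensorRight W).CommShift ℤ)
    (triR : ∀ W : C, letI := csR W; (tensorRight W).IsTriangulated)
    -- the tensor product preserves small coproducts in each variable: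
    (hcoL : ∀ (W : C) (ι : Type v), PreservesColimitsOfShape (Discrete ι) (tensorLeft W))
    (hcoR : ∀ (W : C) (ι : Type v), PreservesColimitsOfShape (Discrete ι) (tensorRight W))
    (F' F'' : C) (n : ℕ) :
    ∀ X ∈ bstarPow {F''} n, F' ⊗ X ∈ bstarPow {F' ⊗ F''} n := by
  letI := csL F'
  haveI := triL F'
  haveI : ∀ ι : Type v, PreservesColimitsOfShape (Discrete ι) (tensorLeft F') := hcoL F'
  intro X hX
  have := StrongGenAux.map_bstarPow (tensorLeft F') {F''} n X hX
  rwa [Set.image_singleton] at this
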